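/- Let a ∈ (0,1) and define t₁(β) = (2/√(1+β²))·arcsin√((1−a²)(1+β²)) for β ∈ [−a/√(1−a²), a/√(1−a²)]. Then: (1) t₁ is an even function; (2) t₁ is strictly increasing on [0, a/√(1−a²)] and strictly decreasing on [−a/√(1−a²), 0]; (3) the range of t₁ is the segment [2·arcsin√(1−a²), π·√(1−a²)]. -/

import Mathlib

open Real Set

/-!
With `c = √(1 - a²)` and `s(β) = √((1 - a²)(1 + β²)) = c √(1 + β²)` one has
`t₁(β) = 2c · arcsin(s(β)) / s(β)`. Since `arcsin` is strictly convex on `[0, 1]` and vanishes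
at `0`, its secant slope `arcsin x / x` is strictly increasing on `(0, 1]`, and `s` increases
from `c` at `β = 0` to `1` at `β = a / c`. Evenness, continuity and the intermediate value
theorem give the rest.
-/

/-- The candidate sub-Riemannian distance `t₁(β)` in the short-time case. -/
noncomputable def t₁ (a β : ℝ) : ℝ :=
  2 / Real.sqrt (1 + β^2) * Real.arcsin (Real.sqrt ((1 - a^2) * (1 + β^2)))

theorem Real.strictConvexOn_arcsin : StrictConvexOn ℝ (Icc 0 1) arcsin := by
  refine StrictMonoOn.strictConvexOn_of_deriv (convex_Icc 0 1) continuous_arcsin.continuousOn ?_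
  rw [interior_Icc, deriv_arcsin]
  intro x ⟨hx0, hx1⟩ y ⟨_, hy1⟩ hxy
  have hy : 0 < √(1 - y ^ 2) := sqrt_pos.2 (by nlinarith)
  exact one_div_lt_one_div_of_lt hy (sqrt_lt_sqrt (by nlinarith) (by nlinarith))

theorem Real.strictMonoOn_arcsin_div_self : StrictMonoOn (fun x => arcsin x / x) (Ioc 0 1) := by
  intro x ⟨hx0, _⟩ y ⟨_, hy1⟩ hxy
  simpa [arcsin_zero] using
    strictConvexOn_arcsin.secant_strict_mono_aux2 (x := 0) ⟨le_rfl, zero_le_one⟩ ⟨by linarith, hy1⟩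
      hx0 hxy

section EvenFunction

variable {α β : Type*} [AddCommGroup α] [LinearOrder α] [IsOrderedAddMonoid α] {f : α → β}

theorem Function.Even.strictAntiOn_Icc_neg [Preorder β] (hf : f.Even) {M : α}
    (h : StrictMonoOn f (Icc 0 M)) : StrictAntiOn f (Icc (-M) 0) := by
  intro x ⟨hxM, hx0⟩ y ⟨hyM, hy0⟩ hxy
  rw [← hf x, ← hf y]
  exact h ⟨neg_nonneg.2 hy0, neg_le.1 hyM⟩ ⟨neg_nonneg.2 hx0, neg_le.1 hxM⟩ (neg_lt_neg hxy)

theorem Function.Even.image_Icc_neg (hf : f.Even) (M : α) : f '' Icc (-M) M = f '' Icc 0 M := by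
  refine Subset.antisymm ?_ (image_mono fun x ⟨hx0, hxM⟩ => ⟨?_, hxM⟩)
  · rintro _ ⟨x, hx, rfl⟩
    refine ⟨|x|, ⟨abs_nonneg x, abs_le.2 hx⟩, ?_⟩
    rcases abs_choice x with h | h <;> rw [h]
    exact hf x
  · exact (neg_nonpos.2 (hx0.trans hxM)).trans hx0

end EvenFunction

theorem t₁_even (a : ℝ) : (t₁ a).Even := fun β => by simp only [t₁, neg_sq]

theorem continuous_t₁ (a : ℝ) : Continuous (t₁ a) := by
  unfold t₁
  fun_prop (disch := exact fun β => (sqrt_pos.2 (by positivity)).ne')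

theorem t₁_zero (a : ℝ) : t₁ a 0 = 2 * arcsin √(1 - a ^ 2) := by
  simp [t₁]

theorem one_sub_sq_mul_one_add_sq_div_sqrt {a : ℝ} (ha : a ^ 2 < 1) :
    (1 - a ^ 2) * (1 + (a / √(1 - a ^ 2)) ^ 2) = 1 := by
  have hc : 1 - a ^ 2 ≠ 0 := by linarith
  rw [div_pow, sq_sqrt (by linarith)]
  field_simp
  ring

theorem t₁_eq_mul_arcsin_div {a : ℝ} (ha : a ^ 2 < 1) (β : ℝ) :
    t₁ a β = 2 * √(1 - a ^ 2) *
      (arcsin √((1 - a ^ 2) * (1 + β ^ 2)) / √((1 - a ^ 2) * (1 + β ^ 2))) := by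
  have hc : 0 < √(1 - a ^ 2) := sqrt_pos.2 (by linarith)
  have hs : 0 < √(1 + β ^ 2) := sqrt_pos.2 (by positivity)
  rw [t₁, sqrt_mul (by linarith)]
  field_simp

theorem t₁_div_sqrt {a : ℝ} (ha : a ^ 2 < 1) : t₁ a (a / √(1 - a ^ 2)) = π * √(1 - a ^ 2) := by
  rw [t₁_eq_mul_arcsin_div ha, one_sub_sq_mul_one_add_sq_div_sqrt ha, sqrt_one, arcsin_one]
  ring

theorem t₁_strictMonoOn {a : ℝ} (ha : a ^ 2 < 1) :
    StrictMonoOn (t₁ a) (Icc 0 (a / √(1 - a ^ 2))) := by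
  set M := a / √(1 - a ^ 2)
  have hc : 0 < 1 - a ^ 2 := by linarith
  have hs_mono : StrictMonoOn (fun β : ℝ => √((1 - a ^ 2) * (1 + β ^ 2))) (Icc 0 M) :=
    fun x ⟨hx, _⟩ y _ hxy => sqrt_lt_sqrt (by positivity) (by gcongr)
  have hs_maps : MapsTo (fun β : ℝ => √((1 - a ^ 2) * (1 + β ^ 2))) (Icc 0 M) (Ioc 0 1) := by
    intro β ⟨hβ0, hβM⟩
    refine ⟨by positivity, sqrt_le_one.2 ?_⟩
    calc (1 - a ^ 2) * (1 + β ^ 2) ≤ (1 - a ^ 2) * (1 + M ^ 2) := by gcongr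
      _ = 1 := one_sub_sq_mul_one_add_sq_div_sqrt ha
  intro x hx y hy hxy
  rw [t₁_eq_mul_arcsin_div ha, t₁_eq_mul_arcsin_div ha]
  have hc' : 0 < 2 * √(1 - a ^ 2) := by positivity
  exact mul_lt_mul_of_pos_left
    (strictMonoOn_arcsin_div_self (hs_maps hx) (hs_maps hy) (hs_mono hx hy hxy)) hc'

/-- The function `t₁` is even, strictly increasing on `[0, a/√(1−a²)]`, strictly decreasing
on `[−a/√(1−a²), 0]`, and its range is `[2 arcsin √(1−a²), π √(1−a²)]`. -/
theorem t₁_properties (a : ℝ) (ha : a ∈ Set.Ioo (0:ℝ) 1) :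
    (∀ β : ℝ, t₁ a (-β) = t₁ a β) ∧
    StrictMonoOn (t₁ a) (Set.Icc 0 (a / Real.sqrt (1 - a^2))) ∧
    StrictAntiOn (t₁ a) (Set.Icc (-(a / Real.sqrt (1 - a^2))) 0) ∧
    t₁ a '' Set.Icc (-(a / Real.sqrt (1 - a^2))) (a / Real.sqrt (1 - a^2)) =
      Set.Icc (2 * Real.arcsin (Real.sqrt (1 - a^2))) (Real.pi * Real.sqrt (1 - a^2)) := by
  obtain ⟨ha0, ha1⟩ := ha
  have ha2 : a ^ 2 < 1 := by nlinarith
  have hM : 0 ≤ a / √(1 - a ^ 2) := by positivity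
  have hmono := t₁_strictMonoOn ha2
  refine ⟨t₁_even a, hmono, (t₁_even a).strictAntiOn_Icc_neg hmono, ?_⟩
  rw [(t₁_even a).image_Icc_neg,
    (continuous_t₁ a).continuousOn.image_Icc_of_monotoneOn hM hmono.monotoneOn,
    t₁_zero, t₁_div_sqrt ha2]
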